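/- arXiv:2508.10153 — 5 statements merged into one kernel-verified Lean document; each statement's English description precedes it below -/
import Mathlib

section
/- For any A, B ∈ F₂[[q]] that are odd (i.e., have constant coefficient 1), the dynamical system T_{A,B} : F₂[[q]] → F₂[[q]] is conjugate to the 3x+1 map T : ℤ₂ → ℤ₂; that is, there exists a bijection h : F₂[[q]] → ℤ₂ such that h ∘ T_{A,B} = T ∘ h. -/
open PowerSeries
open scoped Classical

/-- Shift map on `F₂[[q]]`: equals `x / q` whenever `q ∣ x`. -/
noncomputable def divq (x : PowerSeries (ZMod 2)) : PowerSeries (ZMod 2) :=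
  PowerSeries.mk fun n => PowerSeries.coeff (n + 1) x

/-- `T_{A,B}(x) = x/q` if `q ∣ x`, and `(A*x + B)/q` otherwise.  (When `A`, `B`, `x` are
all odd, `A*x + B` is divisible by `q`, so `divq` computes the true quotient there.) -/
noncomputable def Tab (A B x : PowerSeries (ZMod 2)) : PowerSeries (ZMod 2) :=
  if X ∣ x then divq x else divq (A * x + B)
/-- `half x` is the unique `y` with `x = 2 * y`, when `2 ∣ x` (and `0` otherwise). -/
noncomputable def half (x : ℤ_[2]) : ℤ_[2] :=
  if h : (2 : ℤ_[2]) ∣ x then h.choose else 0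

/-- The `3x+1` map `T : ℤ₂ → ℤ₂`: `x/2` if `x` is even, `(3x+1)/2` if `x` is odd. -/
noncomputable def T3x1 (x : ℤ_[2]) : ℤ_[2] :=
  if (2 : ℤ_[2]) ∣ x then half x else half (3 * x + 1)

namespace CollatzPS

abbrev PS := PowerSeries (ZMod 2)

lemma coeff_divq (n : ℕ) (x : PS) : coeff n (divq x) = coeff (n+1) x :=
  coeff_mk n _

lemma divq_sub (x y : PS) : divq (x - y) = divq x - divq y := by
  ext n; simp [coeff_divq, map_sub]

lemma X_pow_dvd_divq {n : ℕ} {x : PS} (hx : (X : PS) ∣ x) :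
    X ^ (n+1) ∣ x ↔ X ^ n ∣ divq x := by
  rw [X_pow_dvd_iff, X_pow_dvd_iff]
  constructor
  · intro h k hk; rw [coeff_divq]; exact h (k+1) (by omega)
  · intro h k hk
    rcases Nat.eq_zero_or_pos k with rfl | hk0
    · rw [coeff_zero_eq_constantCoeff]; exact (X_dvd_iff).1 hx
    · obtain ⟨j, rfl⟩ := Nat.exists_eq_add_of_lt hk0
      rw [zero_add] at *
      have := h j (by omega)
      rwa [coeff_divq] at this

/-- The parity sequence of `x` under iteration of `Tab A B`. -/
noncomputable def Phi (A B : PS) (x : PS) (n : ℕ) : ZMod 2 :=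
  constantCoeff ((Tab A B)^[n] x)

lemma Phi_zero (A B x : PS) : Phi A B x 0 = constantCoeff x := rfl

lemma Phi_succ (A B x : PS) (n : ℕ) : Phi A B x (n+1) = Phi A B (Tab A B x) n := by
  simp [Phi, Function.iterate_succ_apply]

lemma parity_iff {x y : PS} (h : (X : PS) ∣ x - y) : ((X : PS) ∣ x ↔ (X : PS) ∣ y) := by
  rw [X_dvd_iff, X_dvd_iff] at *
  rw [map_sub, sub_eq_zero] at h
  rw [h]

lemma Tab_sub (A B : PS) {x y : PS} (hpar : ((X : PS) ∣ x ↔ (X : PS) ∣ y)) :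
    Tab A B x - Tab A B y = divq ((if (X : PS) ∣ x then 1 else A) * (x - y)) := by
  by_cases hx : (X : PS) ∣ x
  · have hy : (X : PS) ∣ y := hpar.1 hx
    rw [Tab, Tab, if_pos hx, if_pos hy, if_pos hx, one_mul, divq_sub]
  · have hy : ¬ (X : PS) ∣ y := fun h => hx (hpar.2 h)
    rw [Tab, Tab, if_neg hx, if_neg hy, if_neg hx, ← divq_sub]
    ring_nf

lemma unit_if (A : PS) (hA : constantCoeff A = 1) (c : Prop) [Decidable c] :
    IsUnit (if c then (1 : PS) else A) := by
  split
  · exact isUnit_one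
  · rw [PowerSeries.isUnit_iff_constantCoeff, hA]; exact isUnit_one

lemma step (A B : PS) (hA : constantCoeff A = 1) {n : ℕ} {x y : PS}
    (h : X ^ (n+1) ∣ x - y) :
    (X ^ n ∣ Tab A B x - Tab A B y) ∧
      (¬ X ^ (n+2) ∣ x - y → ¬ X ^ (n+1) ∣ Tab A B x - Tab A B y) := by
  have hd : (X : PS) ∣ x - y := dvd_trans (dvd_pow_self _ (Nat.succ_ne_zero n)) h
  have hpar := parity_iff hd
  set U := if (X : PS) ∣ x then (1 : PS) else A with hU
  have hUu : IsUnit U := unit_if A hA _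
  have heq := Tab_sub A B hpar
  rw [← hU] at heq
  have hXU : (X : PS) ∣ U * (x - y) := hd.mul_left U
  constructor
  · rw [heq, ← X_pow_dvd_divq hXU]
    exact h.mul_left U
  · intro h2 hcon
    rw [heq, ← X_pow_dvd_divq hXU, hUu.dvd_mul_left] at hcon
    exact h2 hcon

lemma PhiA (A B : PS) (hA : constantCoeff A = 1) :
    ∀ (k : ℕ) (x y : PS), X ^ (k+1) ∣ x - y → Phi A B x k = Phi A B y k := by
  intro k
  induction k with
  | zero =>
    intro x y h
    rw [pow_one] at h
    rw [Phi_zero, Phi_zero, ← sub_eq_zero, ← map_sub, ← X_dvd_iff]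
    exact h
  | succ k ih =>
    intro x y h
    rw [Phi_succ, Phi_succ]
    exact ih _ _ (step A B hA h).1

lemma PhiB (A B : PS) (hA : constantCoeff A = 1) :
    ∀ (k : ℕ) (x y : PS), X ^ k ∣ x - y → ¬ X ^ (k+1) ∣ x - y → Phi A B x k ≠ Phi A B y k := by
  intro k
  induction k with
  | zero =>
    intro x y _ h2
    rw [pow_one] at h2
    rw [Phi_zero, Phi_zero]
    intro hc
    exact h2 (X_dvd_iff.2 (by rw [map_sub, hc, sub_self]))
  | succ k ih =>
    intro x y h1 h2
    rw [Phi_succ, Phi_succ]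
    exact ih _ _ (step A B hA h1).1 ((step A B hA h1).2 h2)

lemma Phi_injective (A B : PS) (hA : constantCoeff A = 1) :
    Function.Injective (Phi A B) := by
  intro x y hxy
  by_contra hne
  have hz : x - y ≠ 0 := sub_ne_zero.2 hne
  have hex : ∃ n, ¬ X ^ n ∣ x - y := by
    by_contra hall
    push_neg at hall
    apply hz
    ext n
    have := (X_pow_dvd_iff.1 (hall (n+1))) n (by omega)
    simpa using this
  classical
  set n := Nat.find hex with hn
  have hnd : ¬ X ^ n ∣ x - y := Nat.find_spec hex
  have hn0 : n ≠ 0 := by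
    intro h0
    rw [h0, pow_zero] at hnd
    exact hnd (one_dvd _)
  obtain ⟨m, hm⟩ := Nat.exists_eq_succ_of_ne_zero hn0
  have hmd : X ^ m ∣ x - y := by
    by_contra hc
    have h1 : n ≤ m := hn ▸ Nat.find_le hc
    omega
  rw [hm] at hnd
  exact PhiB A B hA m x y hmd hnd (congrFun hxy m)

/-- The approximating sequence for surjectivity. -/
noncomputable def apx (A B : PS) (s : ℕ → ZMod 2) : ℕ → PS
  | 0 => 0
  | n+1 => if Phi A B (apx A B s n) n = s n then apx A B s n else apx A B s n + X ^ n

lemma apx_diff (A B : PS) (s : ℕ → ZMod 2) (n : ℕ) :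
    ∃ c : ZMod 2, apx A B s (n+1) - apx A B s n = (PowerSeries.C c) * X ^ n := by
  rw [apx]
  split
  · exact ⟨0, by simp⟩
  · exact ⟨1, by simp⟩

lemma zmod2_resolve {a b c : ZMod 2} (h1 : a ≠ b) (h2 : c ≠ b) : a = c := by
  revert h1 h2; revert a b c; decide

lemma apx_spec (A B : PS) (hA : constantCoeff A = 1) (s : ℕ → ZMod 2) :
    ∀ n, ∀ k < n, Phi A B (apx A B s n) k = s k := by
  intro n
  induction n with
  | zero => intro k hk; omega
  | succ n ih =>
    intro k hk
    rcases Nat.lt_succ_iff_lt_or_eq.1 hk with hk | rfl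
    · obtain ⟨c, hc⟩ := apx_diff A B s n
      have : X ^ (k+1) ∣ apx A B s (n+1) - apx A B s n := by
        rw [hc]
        exact Dvd.dvd.mul_left (pow_dvd_pow _ (by omega)) _
      rw [PhiA A B hA k _ _ this]
      exact ih k hk
    · rw [apx]
      split
      · assumption
      · rename_i hne
        refine zmod2_resolve ?_ (Ne.symm hne)
        apply PhiB A B hA
        · simp
        · intro hc
          have := (X_pow_dvd_iff.1 (by simpa using hc)) k (by omega)
          simp at this

lemma apx_coeff_stable (A B : PS) (s : ℕ → ZMod 2) (k m : ℕ) (hm : k < m) :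
    coeff k (apx A B s m) = coeff k (apx A B s (k+1)) := by
  induction m with
  | zero => omega
  | succ m ih =>
    rcases Nat.lt_succ_iff_lt_or_eq.1 hm with hm' | rfl
    · obtain ⟨c, hc⟩ := apx_diff A B s m
      have : coeff k (apx A B s (m+1) - apx A B s m) = 0 := by
        rw [hc]
        simp [coeff_C_mul, coeff_X_pow, Nat.ne_of_lt hm']
      rw [map_sub, sub_eq_zero] at this
      rw [this]
      exact ih hm'
    · rfl

lemma Phi_surjective (A B : PS) (hA : constantCoeff A = 1) :
    Function.Surjective (Phi A B) := by
  intro s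
  set L : PS := PowerSeries.mk (fun k => coeff k (apx A B s (k+1))) with hL
  refine ⟨L, ?_⟩
  funext n
  have hdvd : X ^ (n+1) ∣ L - apx A B s (n+1) := by
    rw [X_pow_dvd_iff]
    intro k hk
    rw [map_sub, hL, coeff_mk, apx_coeff_stable A B s k (n+1) hk, sub_self]
  rw [PhiA A B hA n _ _ hdvd]
  exact apx_spec A B hA s (n+1) n (by omega)

end CollatzPS

namespace Collatz2

lemma half_spec {x : ℤ_[2]} (h : (2 : ℤ_[2]) ∣ x) : 2 * half x = x := by
  rw [half, dif_pos h]
  exact h.choose_spec.symm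

lemma two_cast : ((2 : ℕ) : ℤ_[2]) = 2 := by norm_cast

lemma two_dvd_iff (x : ℤ_[2]) : (2 : ℤ_[2]) ∣ x ↔ PadicInt.toZMod x = 0 := by
  rw [← RingHom.mem_ker, PadicInt.ker_toZMod, PadicInt.maximalIdeal_eq_span_p,
    Ideal.mem_span_singleton, two_cast]

lemma two_ne_zero' : (2 : ℤ_[2]) ≠ 0 := two_ne_zero

lemma not_two_dvd_three : ¬ (2 : ℤ_[2]) ∣ 3 := by
  rw [two_dvd_iff]
  have h3 : PadicInt.toZMod (3 : ℤ_[2]) = (3 : ZMod 2) := by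
    have hc : ((3:ℕ) : ℤ_[2]) = 3 := by simp
    rw [← hc, map_natCast]; decide
  rw [h3]
  decide

lemma isUnit_three : IsUnit (3 : ℤ_[2]) := by
  rw [PadicInt.isUnit_iff]
  have h1 : ‖(3 : ℤ_[2])‖ ≤ 1 := PadicInt.norm_le_one _
  have h2 : ¬ ‖(3 : ℤ_[2])‖ < 1 := by
    rw [PadicInt.norm_lt_one_iff_dvd, two_cast]
    exact not_two_dvd_three
  linarith [lt_or_eq_of_le h1]

lemma odd_step {x : ℤ_[2]} (h : ¬ (2 : ℤ_[2]) ∣ x) : (2 : ℤ_[2]) ∣ 3 * x + 1 := by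
  rw [two_dvd_iff] at h ⊢
  have h3 : PadicInt.toZMod (3 : ℤ_[2]) = (3 : ZMod 2) := by
    have hc : ((3:ℕ) : ℤ_[2]) = 3 := by simp
    rw [← hc, map_natCast]; decide
  rw [map_add, map_mul, map_one, h3]
  revert h
  generalize PadicInt.toZMod x = a
  revert a
  decide

lemma parity_iff2 {x y : ℤ_[2]} (h : (2 : ℤ_[2]) ∣ x - y) :
    ((2 : ℤ_[2]) ∣ x ↔ (2 : ℤ_[2]) ∣ y) := by
  constructor
  · intro hx; simpa using dvd_sub hx h
  · intro hy; simpa using dvd_add h hy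

lemma T_sub {x y : ℤ_[2]} (hpar : ((2 : ℤ_[2]) ∣ x ↔ (2 : ℤ_[2]) ∣ y)) :
    2 * (T3x1 x - T3x1 y) = (if (2 : ℤ_[2]) ∣ x then 1 else 3) * (x - y) := by
  by_cases hx : (2 : ℤ_[2]) ∣ x
  · have hy := hpar.1 hx
    rw [T3x1, T3x1, if_pos hx, if_pos hy, if_pos hx, mul_sub, half_spec hx, half_spec hy, one_mul]
  · have hy : ¬ (2 : ℤ_[2]) ∣ y := fun h => hx (hpar.2 h)
    rw [T3x1, T3x1, if_neg hx, if_neg hy, if_neg hx, mul_sub, half_spec (odd_step hx),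
      half_spec (odd_step hy)]
    ring

lemma step2 {n : ℕ} {x y : ℤ_[2]} (h : (2:ℤ_[2]) ^ (n+1) ∣ x - y) :
    ((2:ℤ_[2]) ^ n ∣ T3x1 x - T3x1 y) ∧
      (¬ (2:ℤ_[2]) ^ (n+2) ∣ x - y → ¬ (2:ℤ_[2]) ^ (n+1) ∣ T3x1 x - T3x1 y) := by
  have hd : (2 : ℤ_[2]) ∣ x - y := dvd_trans (dvd_pow_self _ (Nat.succ_ne_zero n)) h
  have hpar := parity_iff2 hd
  set u := if (2 : ℤ_[2]) ∣ x then (1:ℤ_[2]) else 3 with hu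
  have huu : IsUnit u := by rw [hu]; split; exacts [isUnit_one, isUnit_three]
  have heq : 2 * (T3x1 x - T3x1 y) = u * (x - y) := T_sub hpar
  constructor
  · obtain ⟨t, ht⟩ := h
    refine ⟨u * t, mul_left_cancel₀ two_ne_zero' ?_⟩
    rw [heq, ht]; ring
  · intro h2 hc
    apply h2
    have : (2:ℤ_[2]) ^ (n+2) ∣ 2 * (T3x1 x - T3x1 y) := by
      obtain ⟨t, ht⟩ := hc
      exact ⟨t, by rw [ht]; ring⟩
    rw [heq, huu.dvd_mul_left] at this
    exact this

noncomputable def Psi (x : ℤ_[2]) (n : ℕ) : ZMod 2 := PadicInt.toZMod (T3x1^[n] x)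

lemma Psi_zero (x : ℤ_[2]) : Psi x 0 = PadicInt.toZMod x := rfl

lemma Psi_succ (x : ℤ_[2]) (n : ℕ) : Psi x (n+1) = Psi (T3x1 x) n := by
  simp [Psi, Function.iterate_succ_apply]

lemma PsiA : ∀ (k : ℕ) (x y : ℤ_[2]), (2:ℤ_[2]) ^ (k+1) ∣ x - y → Psi x k = Psi y k := by
  intro k
  induction k with
  | zero =>
    intro x y h
    rw [pow_one] at h
    rw [Psi_zero, Psi_zero, ← sub_eq_zero, ← map_sub, ← two_dvd_iff]
    exact h
  | succ k ih =>
    intro x y h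
    rw [Psi_succ, Psi_succ]
    exact ih _ _ (step2 h).1

lemma PsiB : ∀ (k : ℕ) (x y : ℤ_[2]), (2:ℤ_[2]) ^ k ∣ x - y → ¬ (2:ℤ_[2]) ^ (k+1) ∣ x - y →
    Psi x k ≠ Psi y k := by
  intro k
  induction k with
  | zero =>
    intro x y _ h2
    rw [pow_one] at h2
    rw [Psi_zero, Psi_zero]
    intro hc
    exact h2 ((two_dvd_iff _).2 (by rw [map_sub, hc, sub_self]))
  | succ k ih =>
    intro x y h1 h2
    rw [Psi_succ, Psi_succ]
    exact ih _ _ (step2 h1).1 ((step2 h1).2 h2)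

lemma exists_exact_order {z : ℤ_[2]} (hz : z ≠ 0) :
    ∃ n, (2:ℤ_[2]) ^ n ∣ z ∧ ¬ (2:ℤ_[2]) ^ (n+1) ∣ z := by
  have hex : ∃ n, ¬ (2:ℤ_[2]) ^ n ∣ z := by
    by_contra hall
    push_neg at hall
    have hn : ∀ n : ℕ, ‖z‖ ≤ (2:ℝ) ^ (-(n:ℤ)) := by
      intro n
      rw [show ((2:ℝ)) = ((2:ℕ):ℝ) by norm_cast,
        PadicInt.norm_le_pow_iff_mem_span_pow, Ideal.mem_span_singleton, two_cast]
      exact hall n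
    have hpos : 0 < ‖z‖ := by
      rw [norm_pos_iff]
      exact_mod_cast hz
    obtain ⟨k, hk⟩ := PadicInt.exists_pow_neg_lt 2 hpos
    exact absurd (hn k) (not_le.2 (by exact_mod_cast hk))
  classical
  set n := Nat.find hex with hn
  have hnd : ¬ (2:ℤ_[2]) ^ n ∣ z := Nat.find_spec hex
  have hn0 : n ≠ 0 := by
    intro h0
    rw [h0, pow_zero] at hnd
    exact hnd (one_dvd _)
  obtain ⟨m, hm⟩ := Nat.exists_eq_succ_of_ne_zero hn0
  refine ⟨m, ?_, ?_⟩
  · by_contra hc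
    have h1 : n ≤ m := hn ▸ Nat.find_le hc
    omega
  · rw [hm] at hnd; exact hnd

lemma Psi_injective : Function.Injective Psi := by
  intro x y hxy
  by_contra hne
  obtain ⟨m, h1, h2⟩ := exists_exact_order (sub_ne_zero.2 hne)
  exact PsiB m x y h1 h2 (congrFun hxy m)

noncomputable def apx2 (s : ℕ → ZMod 2) : ℕ → ℤ_[2]
  | 0 => 0
  | n+1 => if Psi (apx2 s n) n = s n then apx2 s n else apx2 s n + 2 ^ n

lemma apx2_diff (s : ℕ → ZMod 2) (n : ℕ) :
    apx2 s (n+1) - apx2 s n = 0 ∨ apx2 s (n+1) - apx2 s n = 2 ^ n := by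
  rw [apx2]
  split
  · left; simp
  · right; ring

lemma apx2_dvd_sub (s : ℕ → ZMod 2) {m n : ℕ} (h : n ≤ m) :
    (2:ℤ_[2]) ^ n ∣ apx2 s m - apx2 s n := by
  induction m with
  | zero =>
    have : n = 0 := by omega
    subst this; simp
  | succ m ih =>
    rcases Nat.lt_succ_iff_lt_or_eq.1 (Nat.lt_succ_of_le h) with h' | rfl
    · have hnm : n ≤ m := by omega
      have : apx2 s (m+1) - apx2 s n = (apx2 s (m+1) - apx2 s m) + (apx2 s m - apx2 s n) := by ring
      rw [this]
      refine dvd_add ?_ (ih hnm)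
      rcases apx2_diff s m with hd | hd
      · rw [hd]; exact dvd_zero _
      · rw [hd]; exact pow_dvd_pow _ hnm
    · simp

lemma not_dvd_pow_two (n : ℕ) : ¬ (2:ℤ_[2]) ^ (n+1) ∣ (2:ℤ_[2]) ^ n := by
  intro h
  have h2 : (2:ℤ_[2]) ^ n * 2 ∣ (2:ℤ_[2]) ^ n * 1 := by
    rw [mul_one, ← pow_succ]; exact h
  have := (mul_dvd_mul_iff_left (a := (2:ℤ_[2])^n) (pow_ne_zero n two_ne_zero')).1 h2
  have hu : IsUnit (2:ℤ_[2]) := isUnit_of_dvd_one this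
  rw [PadicInt.isUnit_iff] at hu
  have : ‖(2:ℤ_[2])‖ < 1 := by
    rw [PadicInt.norm_lt_one_iff_dvd, two_cast]
  linarith

lemma zmod2_resolve' {a b c : ZMod 2} (h1 : a ≠ b) (h2 : c ≠ b) : a = c := by
  revert h1 h2; revert a b c; decide

lemma apx2_spec (s : ℕ → ZMod 2) : ∀ n, ∀ k < n, Psi (apx2 s n) k = s k := by
  intro n
  induction n with
  | zero => intro k hk; omega
  | succ n ih =>
    intro k hk
    rcases Nat.lt_succ_iff_lt_or_eq.1 hk with hk | rfl
    · have hdvd : (2:ℤ_[2]) ^ (k+1) ∣ apx2 s (n+1) - apx2 s n := by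
        rcases apx2_diff s n with hd | hd
        · rw [hd]; exact dvd_zero _
        · rw [hd]; exact pow_dvd_pow _ (by omega)
      rw [PsiA k _ _ hdvd]
      exact ih k hk
    · rw [apx2]
      split
      · assumption
      · rename_i hne
        refine zmod2_resolve' ?_ (Ne.symm hne)
        apply PsiB
        · simp
        · intro hc
          simp only [add_sub_cancel_left] at hc
          exact not_dvd_pow_two k hc

lemma smod_iff (x y : ℤ_[2]) (n : ℕ) :
    x ≡ y [SMOD ((IsLocalRing.maximalIdeal ℤ_[2]) ^ n • ⊤ : Submodule ℤ_[2] ℤ_[2])] ↔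
      (2:ℤ_[2]) ^ n ∣ x - y := by
  rw [SModEq.sub_mem]
  simp only [← Ideal.one_eq_top, smul_eq_mul, mul_one]
  rw [PadicInt.maximalIdeal_eq_span_p, Ideal.span_singleton_pow, Ideal.mem_span_singleton, two_cast]

lemma Psi_surjective : Function.Surjective Psi := by
  intro s
  have hprec := IsPrecomplete.prec
    (IsAdicComplete.toIsPrecomplete (I := IsLocalRing.maximalIdeal ℤ_[2]) (M := ℤ_[2]))
    (f := apx2 s) (fun {m n} h => (smod_iff _ _ m).2 (dvd_sub_comm.1 (apx2_dvd_sub s h)))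
  obtain ⟨L, hL⟩ := hprec
  refine ⟨L, ?_⟩
  funext n
  have hmem := (smod_iff _ _ (n+1)).1 (hL (n+1))
  rw [PsiA n L (apx2 s (n+1)) (dvd_sub_comm.1 hmem)]
  exact apx2_spec s (n+1) n (by omega)

end Collatz2

/-- For odd `A, B ∈ F₂[[q]]`, the map `T_{A,B}` is conjugate to the `3x+1` map `T` on `ℤ₂`:
there is a bijection `h : F₂[[q]] → ℤ₂` with `h ∘ T_{A,B} = T ∘ h`. -/
theorem Tab_conjugate_T3x1 (A B : PowerSeries (ZMod 2))
    (hA : PowerSeries.constantCoeff A = 1)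
    (hB : PowerSeries.constantCoeff B = 1) :
    ∃ h : PowerSeries (ZMod 2) → ℤ_[2],
      Function.Bijective h ∧ h ∘ Tab A B = T3x1 ∘ h := by
  have hPsi : Function.Bijective Collatz2.Psi :=
    ⟨Collatz2.Psi_injective, Collatz2.Psi_surjective⟩
  have hPhi : Function.Bijective (CollatzPS.Phi A B) :=
    ⟨CollatzPS.Phi_injective A B hA, CollatzPS.Phi_surjective A B hA⟩
  set e := Equiv.ofBijective _ hPsi with he
  refine ⟨fun x => e.symm (CollatzPS.Phi A B x), ?_, ?_⟩
  · exact (Equiv.bijective e.symm).comp hPhi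
  · funext x
    simp only [Function.comp_apply]
    apply Collatz2.Psi_injective
    have h1 : ∀ s, Collatz2.Psi (e.symm s) = s := fun s => e.apply_symm_apply s
    rw [h1]
    funext n
    rw [← Collatz2.Psi_succ, h1]
    exact (CollatzPS.Phi_succ A B x n).symm
end

section
/- The map T_q : F₂[[q]] → F₂[[q]], sending x to x/q if q divides x and to ((1+q)x+1)/q otherwise, is conjugate to the 3x+1 map T : ℤ₂ → ℤ₂; that is, there exists a bijection h : F₂[[q]] → ℤ₂ such that h ∘ T_q = T ∘ h. -/
open PowerSeries
open scoped Classical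

/-! Both maps have the shape `t * f x = x` for `t ∣ x` and `t * f x = a * x + b` otherwise, on a
`t`-adically complete domain (`t = q` resp. `t = 2`), with `a` a unit and `t ∤ b`. On points of
the same parity such a map multiplies differences by the unit `a / t` or `1 / t`, so
`x ≡ y mod t ^ n` holds exactly when the orbits of `x` and `y` have the same parities for `n`
steps. Hence the parity vector `x ↦ (t ∣ f^[n] x)ₙ` is injective by Hausdorffness and, since
each parity branch of `f` can be inverted, surjective by completeness; it conjugates `f` to the
shift, so composing the parity vector of `T_q` with the inverse of that of `T` gives the
conjugacy. -/

open Function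

section AdicDivisibility

variable {α : Type*} [CommRing α] {t : α}

theorem smodEq_span_singleton_pow_iff {x y : α} {n : ℕ} :
    x ≡ y [SMOD (Ideal.span {t} ^ n • ⊤ : Submodule α α)] ↔ t ^ n ∣ x - y := by
  rw [SModEq.sub_mem, smul_eq_mul, Ideal.mul_top, Ideal.span_singleton_pow,
    Ideal.mem_span_singleton]

theorem eq_of_forall_pow_dvd_sub [IsHausdorff (Ideal.span {t}) α] {x y : α}
    (h : ∀ n, t ^ n ∣ x - y) : x = y :=
  IsHausdorff.eq_iff_smodEq.2 fun _ => smodEq_span_singleton_pow_iff.2 (h _)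

theorem exists_forall_pow_dvd_sub [IsPrecomplete (Ideal.span {t}) α] {u : ℕ → α}
    (hu : ∀ m n, m ≤ n → t ^ m ∣ u m - u n) : ∃ L, ∀ n, t ^ n ∣ u n - L := by
  obtain ⟨L, hL⟩ := IsPrecomplete.prec inferInstance fun {m n} hmn =>
    smodEq_span_singleton_pow_iff.2 (hu m n hmn)
  exact ⟨L, fun n => smodEq_span_singleton_pow_iff.1 (hL n)⟩

end AdicDivisibility

section ParityVector

variable {α : Type*} [CommRing α] {t a b : α} {f : α → α}

def parityVector (t : α) (f : α → α) (x : α) (n : ℕ) : Prop :=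
  t ∣ f^[n] x

theorem parityVector_semiconj (t : α) (f : α → α) :
    Semiconj (parityVector t f) f (fun s n => s (n + 1)) :=
  fun _ => rfl

theorem pow_succ_dvd_sub_iff_pow_dvd_map_sub [IsDomain α] (ht : t ≠ 0) (ha : IsUnit a)
    (hf : ∀ x, t * f x = if t ∣ x then x else a * x + b) {x y : α} (hxy : t ∣ x ↔ t ∣ y)
    (n : ℕ) : t ^ (n + 1) ∣ x - y ↔ t ^ n ∣ f x - f y := by
  obtain ⟨c, hc, hcxy⟩ : ∃ c, IsUnit c ∧ t * (f x - f y) = c * (x - y) := by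
    by_cases hx : t ∣ x
    · exact ⟨1, isUnit_one, by rw [mul_sub, hf, hf, if_pos hx, if_pos (hxy.1 hx), one_mul]⟩
    · refine ⟨a, ha, ?_⟩
      rw [mul_sub, hf, hf, if_neg hx, if_neg (mt hxy.2 hx)]
      ring
  rw [← mul_dvd_mul_iff_left ht (b := t ^ n), ← pow_succ', hcxy, hc.dvd_mul_left]

theorem pow_dvd_sub_iff_parityVector [IsDomain α] (ht : t ≠ 0) (ha : IsUnit a)
    (hf : ∀ x, t * f x = if t ∣ x then x else a * x + b) {n : ℕ} {x y : α} :
    t ^ n ∣ x - y ↔ ∀ k < n, (parityVector t f x k ↔ parityVector t f y k) := by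
  induction n generalizing x y with
  | zero => simp
  | succ n ih =>
    rw [Nat.forall_lt_succ_left]
    constructor
    · intro h
      have hxy : t ∣ x ↔ t ∣ y :=
        dvd_iff_dvd_of_dvd_sub ((dvd_pow_self t n.succ_ne_zero).trans h)
      exact ⟨hxy, ih.1 ((pow_succ_dvd_sub_iff_pow_dvd_map_sub ht ha hf hxy n).1 h)⟩
    · rintro ⟨hxy, h⟩
      exact (pow_succ_dvd_sub_iff_pow_dvd_map_sub ht ha hf hxy n).2 (ih.2 h)

theorem exists_dvd_iff_and_eq [IsDomain α] (ht : t ≠ 0) (ha : IsUnit a) (hb : ¬t ∣ b)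
    (hf : ∀ x, t * f x = if t ∣ x then x else a * x + b) (p : Prop) (z : α) :
    ∃ x, (t ∣ x ↔ p) ∧ f x = z := by
  by_cases hp : p
  · have hx : t ∣ t * z := dvd_mul_right t z
    exact ⟨t * z, iff_of_true hx hp, mul_left_cancel₀ ht (by rw [hf, if_pos hx])⟩
  · obtain ⟨u, rfl⟩ := ha
    have hx : ¬t ∣ ↑u⁻¹ * (t * z - b) := by
      rwa [Units.dvd_mul_left, dvd_sub_right (dvd_mul_right t z)]
    refine ⟨↑u⁻¹ * (t * z - b), iff_of_false hx hp, mul_left_cancel₀ ht ?_⟩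
    rw [hf, if_neg hx, Units.mul_inv_cancel_left, sub_add_cancel]

theorem exists_parityVector_eq_on_lt [IsDomain α] (ht : t ≠ 0) (ha : IsUnit a) (hb : ¬t ∣ b)
    (hf : ∀ x, t * f x = if t ∣ x then x else a * x + b) (s : ℕ → Prop) (n : ℕ) :
    ∃ x, ∀ k < n, (parityVector t f x k ↔ s k) := by
  induction n generalizing s with
  | zero => exact ⟨0, by simp⟩
  | succ n ih =>
    obtain ⟨z, hz⟩ := ih fun k => s (k + 1)
    obtain ⟨x, hx, rfl⟩ := exists_dvd_iff_and_eq ht ha hb hf (s 0) z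
    exact ⟨x, Nat.forall_lt_succ_left.2 ⟨hx, hz⟩⟩

theorem parityVector_bijective [IsDomain α] [IsAdicComplete (Ideal.span {t}) α] (ht : t ≠ 0)
    (ha : IsUnit a) (hb : ¬t ∣ b) (hf : ∀ x, t * f x = if t ∣ x then x else a * x + b) :
    Bijective (parityVector t f) := by
  refine ⟨fun x y h => eq_of_forall_pow_dvd_sub fun n =>
    (pow_dvd_sub_iff_parityVector ht ha hf).2 fun k _ => by rw [h], fun s => ?_⟩
  choose u hu using exists_parityVector_eq_on_lt ht ha hb hf s
  obtain ⟨L, hL⟩ := exists_forall_pow_dvd_sub fun m n hmn =>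
    (pow_dvd_sub_iff_parityVector ht ha hf).2 fun k hk =>
      (hu m k hk).trans (hu n k (hk.trans_le hmn)).symm
  refine ⟨L, funext fun k => propext ?_⟩
  exact ((pow_dvd_sub_iff_parityVector ht ha hf).1 (hL (k + 1)) k k.lt_succ_self).symm.trans
    (hu (k + 1) k k.lt_succ_self)

end ParityVector

theorem exists_bijective_semiconj_of_semiconj {α β γ : Type*} {f : α → α} {g : β → β}
    {σ : γ → γ} {φ : α → γ} {ψ : β → γ} (hφ : Bijective φ) (hψ : Bijective ψ)
    (hφσ : Semiconj φ f σ) (hψσ : Semiconj ψ g σ) :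
    ∃ h : α → β, Bijective h ∧ Semiconj h f g := by
  let e := Equiv.ofBijective ψ hψ
  exact ⟨e.symm ∘ φ, e.symm.bijective.comp hφ,
    hφσ.trans (hψσ.inverse_left e.left_inv e.right_inv)⟩

section PowerSeries

theorem X_mul_divq {x : PowerSeries (ZMod 2)} (h : X ∣ x) : X * divq x = x := by
  simpa [divq, X_dvd_iff.1 h] using (sub_const_eq_X_mul_shift x).symm

theorem X_dvd_add_of_not_X_dvd {x y : PowerSeries (ZMod 2)} (hx : ¬X ∣ x) (hy : ¬X ∣ y) :
    X ∣ x + y := by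
  have hodd : ∀ c : ZMod 2, c ≠ 0 → c = 1 := by decide
  rw [X_dvd_iff] at hx hy ⊢
  rw [map_add, hodd _ hx, hodd _ hy]
  decide

theorem X_mul_Tab {A B : PowerSeries (ZMod 2)} (hA : ¬X ∣ A) (hB : ¬X ∣ B)
    (x : PowerSeries (ZMod 2)) :
    X * Tab A B x = if X ∣ x then x else A * x + B := by
  unfold Tab
  split_ifs with hx
  · exact X_mul_divq hx
  · refine X_mul_divq (X_dvd_add_of_not_X_dvd ?_ hB)
    rw [X_dvd_iff, map_mul, mul_eq_zero, not_or, ← X_dvd_iff, ← X_dvd_iff]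
    exact ⟨hA, hx⟩

theorem parityVector_Tab_bijective {A B : PowerSeries (ZMod 2)} (hA : ¬X ∣ A) (hB : ¬X ∣ B) :
    Bijective (parityVector X (Tab A B)) :=
  parityVector_bijective X_ne_zero
    (isUnit_iff_constantCoeff.2 (isUnit_iff_ne_zero.2 (X_dvd_iff.not.1 hA))) hB (X_mul_Tab hA hB)

end PowerSeries

section TwoAdic

instance : IsAdicComplete (Ideal.span {(2 : ℤ_[2])}) ℤ_[2] := by
  simpa [PadicInt.maximalIdeal_eq_span_p] using
    (inferInstance : IsAdicComplete (IsLocalRing.maximalIdeal ℤ_[2]) ℤ_[2])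

theorem two_dvd_or_two_dvd_sub_one (x : ℤ_[2]) : 2 ∣ x ∨ 2 ∣ x - 1 := by
  obtain ⟨n, hn, hx⟩ := PadicInt.exists_mem_range (p := 2) x
  rw [PadicInt.maximalIdeal_eq_span_p, Ideal.mem_span_singleton] at hx
  interval_cases n
  exacts [Or.inl (by simpa using hx), Or.inr (by simpa using hx)]

theorem two_mul_half {x : ℤ_[2]} (h : 2 ∣ x) : 2 * half x = x := by
  rw [half, dif_pos h]
  exact h.choose_spec.symm

theorem two_mul_T3x1 (x : ℤ_[2]) : 2 * T3x1 x = if 2 ∣ x then x else 3 * x + 1 := by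
  unfold T3x1
  split_ifs with hx
  · exact two_mul_half hx
  · obtain ⟨y, hy⟩ := (two_dvd_or_two_dvd_sub_one x).resolve_left hx
    exact two_mul_half ⟨3 * y + 2, by linear_combination 3 * hy⟩

theorem isUnit_three : IsUnit (3 : ℤ_[2]) := by
  have h : ‖((3 : ℕ) : ℤ_[2])‖ = 1 := PadicInt.norm_natCast_eq_one_iff.2 (by norm_num)
  exact PadicInt.isUnit_iff.2 (by simpa using h)

theorem not_two_dvd_one : ¬(2 : ℤ_[2]) ∣ 1 := by
  have h : ‖((2 : ℕ) : ℤ_[2])‖ < 1 := PadicInt.norm_natCast_lt_one_iff.2 dvd_rfl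
  exact fun h2 => PadicInt.not_isUnit_iff.2 (by simpa using h) (isUnit_of_dvd_one h2)

theorem parityVector_T3x1_bijective : Bijective (parityVector 2 T3x1) :=
  parityVector_bijective two_ne_zero isUnit_three not_two_dvd_one two_mul_T3x1

end TwoAdic

/-- The map `T_q = T_{1+q,1}` is conjugate to the `3x+1` map `T` on `ℤ₂`:
there is a bijection `h : F₂[[q]] → ℤ₂` with `h ∘ T_q = T ∘ h`. -/
theorem Tq_conjugate_T3x1 :
    ∃ h : PowerSeries (ZMod 2) → ℤ_[2],
      Function.Bijective h ∧ h ∘ Tab (1 + X) 1 = T3x1 ∘ h := by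
  obtain ⟨h, hbij, hconj⟩ := exists_bijective_semiconj_of_semiconj
    (parityVector_Tab_bijective (A := 1 + X) (B := 1) (by simp [X_dvd_iff]) (by simp [X_dvd_iff]))
    parityVector_T3x1_bijective (parityVector_semiconj _ _) (parityVector_semiconj _ _)
  exact ⟨h, hbij, hconj.comp_eq⟩
end

section
/- Let A, B ∈ F₂[[q]] be odd, let n ∈ ℕ, and let U, V ∈ F₂[[q]] with V odd. Then for every natural number k ≤ n+1 there exists an odd W_k ∈ F₂[[q]] such that T_{A,B}^k(U + q^{n+1} V) = T_{A,B}^k(U) + q^{n+1−k} W_k. -/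
open PowerSeries
open scoped Classical

/-
A perturbation `q^(m+1) y` of `x` does not change the parity of `x`, so `T_{A,B}` applies the
same branch to `x` and to `x + q^(m+1) y`; as that branch is affine, the perturbation becomes
`q^m y` or `q^m A y`, which is again odd times a power of `q` when `A` and `y` are odd.
Iterating `k` times lowers the exponent by `k`.
-/

lemma divq_add (x y : PowerSeries (ZMod 2)) : divq (x + y) = divq x + divq y := by
  ext n
  simp [divq]

lemma divq_X_pow_succ_mul (m : ℕ) (y : PowerSeries (ZMod 2)) :
    divq (X ^ (m + 1) * y) = X ^ m * y := by
  ext n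
  rw [divq, coeff_mk, pow_succ', mul_assoc, coeff_succ_X_mul]

lemma X_dvd_add_X_pow_succ_mul_iff (m : ℕ) (x y : PowerSeries (ZMod 2)) :
    X ∣ x + X ^ (m + 1) * y ↔ X ∣ x :=
  dvd_add_left (dvd_mul_of_dvd_left (dvd_pow_self X m.succ_ne_zero) y)

lemma Tab_add_X_pow_succ_mul (A B : PowerSeries (ZMod 2)) (m : ℕ) (x y : PowerSeries (ZMod 2)) :
    Tab A B (x + X ^ (m + 1) * y) = Tab A B x + X ^ m * (if X ∣ x then y else A * y) := by
  by_cases hx : X ∣ x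
  · rw [Tab, Tab, X_dvd_add_X_pow_succ_mul_iff, if_pos hx, if_pos hx, if_pos hx, divq_add,
      divq_X_pow_succ_mul]
  · have hsplit : A * (x + X ^ (m + 1) * y) + B = (A * x + B) + X ^ (m + 1) * (A * y) := by ring
    rw [Tab, Tab, X_dvd_add_X_pow_succ_mul_iff, if_neg hx, if_neg hx, if_neg hx, hsplit,
      divq_add, divq_X_pow_succ_mul]

lemma Tab_iterate_add_X_pow_mul (A B : PowerSeries (ZMod 2)) (hA : constantCoeff A = 1)
    (k m : ℕ) (x y : PowerSeries (ZMod 2)) (hy : constantCoeff y = 1) :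
    ∃ W : PowerSeries (ZMod 2), constantCoeff W = 1 ∧
      (Tab A B)^[k] (x + X ^ (k + m) * y) = (Tab A B)^[k] x + X ^ m * W := by
  induction k generalizing x y with
  | zero => exact ⟨y, hy, by simp⟩
  | succ k ih =>
    have hodd : constantCoeff (if X ∣ x then y else A * y) = 1 := by
      split_ifs <;> simp [hA, hy]
    obtain ⟨W, hW, hEq⟩ := ih (Tab A B x) _ hodd
    refine ⟨W, hW, ?_⟩
    rw [Function.iterate_succ_apply, Function.iterate_succ_apply, Nat.add_right_comm,
      Tab_add_X_pow_succ_mul, hEq]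

theorem Tab_iterate_add_qpow_succ_general (A B : PowerSeries (ZMod 2))
    (hA : PowerSeries.constantCoeff A = 1)
    (n : ℕ) (U V : PowerSeries (ZMod 2))
    (hV : PowerSeries.constantCoeff V = 1) :
    ∀ k ≤ n + 1, ∃ W : PowerSeries (ZMod 2),
      PowerSeries.constantCoeff W = 1 ∧
      (Tab A B)^[k] (U + X ^ (n + 1) * V) = (Tab A B)^[k] U + X ^ (n + 1 - k) * W := by
  intro k hk
  obtain ⟨m, hm⟩ := Nat.exists_eq_add_of_le hk
  rw [hm, Nat.add_sub_cancel_left]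
  exact Tab_iterate_add_X_pow_mul A B hA k m U V hV

/-- For odd `A, B, V`, any `U`, and any `k ≤ n+1`,
`T_{A,B}^k(U + q^{n+1} V) = T_{A,B}^k(U) + q^{n+1-k} W_k` for some odd `W_k`. -/
theorem Tab_iterate_add_qpow_succ (A B : PowerSeries (ZMod 2))
    (hA : PowerSeries.constantCoeff A = 1)
    (hB : PowerSeries.constantCoeff B = 1)
    (n : ℕ) (U V : PowerSeries (ZMod 2))
    (hV : PowerSeries.constantCoeff V = 1) :
    ∀ k ≤ n + 1, ∃ W : PowerSeries (ZMod 2),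
      PowerSeries.constantCoeff W = 1 ∧
      (Tab A B)^[k] (U + X ^ (n + 1) * V) = (Tab A B)^[k] U + X ^ (n + 1 - k) * W :=
  Tab_iterate_add_qpow_succ_general A B hA n U V hV
end

section
/- Let A, B ∈ F₂[[q]] be odd. For every sequence s : ℕ → F₂ there exists a ∈ F₂[[q]] such that for every k ∈ ℕ, the parity of T_{A,B}^k(a) equals s(k). (The parity vector map PV_{A,B} is surjective onto all binary sequences.) -/
open PowerSeries
open scoped Classical

theorem PowerSeries.coeff_mul_of_constantCoeff_eq_one {R : Type*} [CommSemiring R]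
    {A x : PowerSeries R} {n : ℕ} (hA : constantCoeff A = 1)
    (hx : ∀ i < n, coeff i x = 0) :
    coeff n (A * x) = coeff n x := by
  obtain ⟨z, rfl⟩ := (X_pow_dvd_iff (n := n)).mpr hx
  have hcoeff : ∀ w : PowerSeries R, coeff n (X ^ n * w) = constantCoeff w := fun w => by
    simpa using coeff_X_pow_mul w n 0
  rw [mul_left_comm, hcoeff, hcoeff, map_mul, hA, one_mul]

@[simp]
theorem coeff_divq (n : ℕ) (x : PowerSeries (ZMod 2)) :
    coeff n (divq x) = coeff (n + 1) x :=
  coeff_mk _ _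

theorem coeff_Tab_sub_Tab {A : PowerSeries (ZMod 2)} (B : PowerSeries (ZMod 2))
    (hA : constantCoeff A = 1) {x y : PowerSeries (ZMod 2)} {m : ℕ}
    (h : ∀ i ≤ m, coeff i x = coeff i y) :
    coeff m (Tab A B x - Tab A B y) = coeff (m + 1) (x - y) := by
  have hdvd : X ∣ x ↔ X ∣ y := by
    simp only [X_dvd_iff, ← coeff_zero_eq_constantCoeff_apply, h 0 m.zero_le]
  by_cases hx : X ∣ x
  · simp [Tab, hx, hdvd.mp hx]
  · have hlow : ∀ i < m + 1, coeff i (x - y) = 0 := fun i hi => by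
      rw [map_sub, h i (Nat.lt_succ_iff.mp hi), sub_self]
    rw [Tab, Tab, if_neg hx, if_neg (hdvd.not.mp hx), map_sub, coeff_divq, coeff_divq,
      ← map_sub, ← coeff_mul_of_constantCoeff_eq_one hA hlow]
    ring_nf

theorem coeff_iterate_Tab_sub {A : PowerSeries (ZMod 2)} (B : PowerSeries (ZMod 2))
    (hA : constantCoeff A = 1) (k : ℕ) :
    ∀ {n : ℕ} {x y : PowerSeries (ZMod 2)}, (∀ i < n + k, coeff i x = coeff i y) →
      coeff n ((Tab A B)^[k] x - (Tab A B)^[k] y) = coeff (n + k) (x - y) := by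
  induction k with
  | zero => intro n x y _; rfl
  | succ k ih =>
    intro n x y h
    have hT : ∀ i < n + k, coeff i (Tab A B x) = coeff i (Tab A B y) := fun i hi => by
      rw [← sub_eq_zero, ← map_sub, coeff_Tab_sub_Tab B hA fun j hj => h j (by omega),
        map_sub, h (i + 1) (by omega), sub_self]
    rw [Function.iterate_succ_apply, Function.iterate_succ_apply, ih hT,
      coeff_Tab_sub_Tab B hA fun j hj => h j (by omega), add_assoc]

/-- The `k`-th coefficient corrects the parity of `T^k` applied to the truncation below `k`. -/
noncomputable def parityVectorCoeff (A B : PowerSeries (ZMod 2)) (s : ℕ → ZMod 2) : ℕ → ZMod 2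
  | k => s k - constantCoeff
      ((Tab A B)^[k] (PowerSeries.mk fun i => if i < k then parityVectorCoeff A B s i else 0))

theorem Tab_parity_vector_surjective_general (A B : PowerSeries (ZMod 2))
    (hA : PowerSeries.constantCoeff A = 1)
    (s : ℕ → ZMod 2) :
    ∃ a : PowerSeries (ZMod 2),
      ∀ k : ℕ, PowerSeries.constantCoeff ((Tab A B)^[k] a) = s k := by
  set c := parityVectorCoeff A B s
  refine ⟨PowerSeries.mk c, fun k => ?_⟩
  set prefix_k := PowerSeries.mk fun i => if i < k then c i else 0
  have hagree : ∀ i < 0 + k, coeff i (PowerSeries.mk c) = coeff i prefix_k := fun i hi => by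
    simp [prefix_k, show i < k by omega]
  have hck : c k = s k - constantCoeff ((Tab A B)^[k] prefix_k) := parityVectorCoeff.eq_1 A B s k
  have hdiff := coeff_iterate_Tab_sub B hA k hagree
  rw [zero_add, coeff_zero_eq_constantCoeff_apply, map_sub, map_sub, coeff_mk, hck,
    coeff_mk, if_neg k.lt_irrefl, sub_zero] at hdiff
  exact sub_left_injective hdiff

/-- For odd `A, B`: every binary sequence `s : ℕ → F₂` is the parity vector of some
`a ∈ F₂[[q]]` (the parity vector map is surjective). -/
theorem Tab_parity_vector_surjective (A B : PowerSeries (ZMod 2))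
    (hA : PowerSeries.constantCoeff A = 1)
    (hB : PowerSeries.constantCoeff B = 1)
    (s : ℕ → ZMod 2) :
    ∃ a : PowerSeries (ZMod 2),
      ∀ k : ℕ, PowerSeries.constantCoeff ((Tab A B)^[k] a) = s k :=
  Tab_parity_vector_surjective_general A B hA s
end

section
/- An element x ∈ F₂[[q]] satisfies T_{1,1+q²}(x) = x if and only if x ∈ {0, 1+q}, and satisfies T_{1,1+q²}(T_{1,1+q²}(x)) = x if and only if x ∈ {0, 1+q, 1, q}. In particular, the unique 2-cycle of T_{1,1+q²} is {1, q} and its fixed points are 0 and 1+q. -/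
open PowerSeries
open scoped Classical

/-!
Write `c(x) ∈ {0, 1}` for the constant coefficient of `x` and `T = T_{1,1+q²}`. In both branches
of its definition, `q · T(x) = x + c(x) (1 + q²)`, and `1 + q² = (1 + q)²` in characteristic 2.
A fixed point therefore satisfies `(1 + q) x = c(x) (1 + q)²`, so `x = c(x) (1 + q)`. For a point
of period dividing 2, with `y = T(x)`, eliminating `x` between the two relations gives
`(1 + q)² y = (1 + q)² (c(y) + c(x) q)`, hence `y = c(y) + c(x) q` and then `x = c(x) + c(y) q`.
Cancelling is legitimate because `F₂[[q]]` is a domain.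
-/

lemma ZMod.two_eq_zero_or_one (a : ZMod 2) : a = 0 ∨ a = 1 := by
  revert a; decide

namespace PowerSeries

lemma two_eq_zero_of_zmod_two : (2 : (ZMod 2)⟦X⟧) = 0 := by
  rw [← map_ofNat C 2, show (2 : ZMod 2) = 0 from rfl, map_zero]

lemma one_add_X_ne_zero {R : Type*} [Semiring R] [Nontrivial R] :
    (1 + X : R⟦X⟧) ≠ 0 := by
  intro h; simpa using congrArg constantCoeff h

end PowerSeries

lemma X_mul_divq_add_C (x : (ZMod 2)⟦X⟧) : X * divq x + C (constantCoeff x) = x :=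
  (eq_X_mul_shift_add_const x).symm

lemma X_mul_Tab_one {B : (ZMod 2)⟦X⟧} (hB : constantCoeff B = 1) (x : (ZMod 2)⟦X⟧) :
    X * Tab 1 B x = x + C (constantCoeff x) * B := by
  by_cases hx : X ∣ x
  · have hx0 : constantCoeff x = 0 := X_dvd_iff.mp hx
    simpa [Tab, hx, hx0] using X_mul_divq_add_C x
  · have hx1 : constantCoeff x = 1 :=
      (ZMod.two_eq_zero_or_one _).resolve_left (mt X_dvd_iff.mpr hx)
    have hxB : constantCoeff (x + B) = 0 := by rw [map_add, hx1, hB]; rfl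
    simpa [Tab, hx, hx1, hxB] using X_mul_divq_add_C (x + B)

lemma Tab_one_eq_iff {B : (ZMod 2)⟦X⟧} (hB : constantCoeff B = 1) {x y : (ZMod 2)⟦X⟧} :
    Tab 1 B x = y ↔ X * y = x + C (constantCoeff x) * B := by
  rw [← X_mul_Tab_one hB, mul_right_inj' X_ne_zero, eq_comm]

lemma constantCoeff_one_add_X_sq : constantCoeff (1 + X ^ 2 : (ZMod 2)⟦X⟧) = 1 := by
  simp

lemma eq_C_mul_one_add_X_of_Tab_eq_self {x : (ZMod 2)⟦X⟧} (h : Tab 1 (1 + X ^ 2) x = x) :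
    x = C (constantCoeff x) * (1 + X) := by
  rw [Tab_one_eq_iff constantCoeff_one_add_X_sq] at h
  refine mul_left_cancel₀ one_add_X_ne_zero ?_
  linear_combination h + (x - X * C (constantCoeff x)) * two_eq_zero_of_zmod_two

lemma eq_C_add_C_mul_X_of_Tab_Tab_eq_self {x : (ZMod 2)⟦X⟧}
    (h : Tab 1 (1 + X ^ 2) (Tab 1 (1 + X ^ 2) x) = x) :
    x = C (constantCoeff x) + C (constantCoeff (Tab 1 (1 + X ^ 2) x)) * X := by
  set y := Tab 1 (1 + X ^ 2) x
  have hy : X * y = x + C (constantCoeff x) * (1 + X ^ 2) :=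
    (Tab_one_eq_iff constantCoeff_one_add_X_sq).mp rfl
  rw [Tab_one_eq_iff constantCoeff_one_add_X_sq] at h
  set c₀ := C (constantCoeff x)
  set c₁ := C (constantCoeff y)
  have hy' : y = c₁ + c₀ * X := by
    refine mul_left_cancel₀ (pow_ne_zero 2 one_add_X_ne_zero) ?_
    linear_combination
      X * hy + h + (y + X * y - X * (c₁ + c₀ * X)) * two_eq_zero_of_zmod_two
  refine mul_left_cancel₀ X_ne_zero ?_
  linear_combination h + hy' + c₁ * two_eq_zero_of_zmod_two

lemma Tab_zero : Tab 1 (1 + X ^ 2) 0 = 0 := by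
  simp [Tab_one_eq_iff constantCoeff_one_add_X_sq]

lemma Tab_one : Tab 1 (1 + X ^ 2) 1 = X := by
  rw [Tab_one_eq_iff constantCoeff_one_add_X_sq, map_one, map_one]
  linear_combination -two_eq_zero_of_zmod_two

lemma Tab_X : Tab 1 (1 + X ^ 2) X = 1 := by
  simp [Tab_one_eq_iff constantCoeff_one_add_X_sq]

lemma Tab_one_add_X : Tab 1 (1 + X ^ 2) (1 + X) = 1 + X := by
  rw [Tab_one_eq_iff constantCoeff_one_add_X_sq]
  simp only [map_add, map_one, constantCoeff_X, add_zero]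
  linear_combination -two_eq_zero_of_zmod_two

/-- The fixed points of `T_{1,1+q²}` are exactly `0` and `1+q`, and the points of period
dividing 2 are exactly `0`, `1+q`, `1`, `q`; in particular the unique 2-cycle is `{1, q}`. -/
theorem Tab_one_periodic_points (x : PowerSeries (ZMod 2)) :
    (Tab 1 (1 + X ^ 2) x = x ↔ x ∈ ({0, 1 + X} : Set (PowerSeries (ZMod 2)))) ∧
    (Tab 1 (1 + X ^ 2) (Tab 1 (1 + X ^ 2) x) = x ↔
      x ∈ ({0, 1 + X, 1, X} : Set (PowerSeries (ZMod 2)))) := by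
  refine ⟨⟨fun h => ?_, ?_⟩, ⟨fun h => ?_, ?_⟩⟩
  · rw [eq_C_mul_one_add_X_of_Tab_eq_self h]
    rcases ZMod.two_eq_zero_or_one (constantCoeff x) with hc | hc <;> simp [hc]
  · rintro (rfl | rfl)
    exacts [Tab_zero, Tab_one_add_X]
  · rw [eq_C_add_C_mul_X_of_Tab_Tab_eq_self h]
    rcases ZMod.two_eq_zero_or_one (constantCoeff x) with hc₀ | hc₀ <;>
      rcases ZMod.two_eq_zero_or_one (constantCoeff (Tab 1 (1 + X ^ 2) x)) with hc₁ | hc₁ <;>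
      simp [hc₀, hc₁]
  · rintro (rfl | rfl | rfl | rfl)
    · rw [Tab_zero, Tab_zero]
    · rw [Tab_one_add_X, Tab_one_add_X]
    · rw [Tab_one, Tab_X]
    · rw [Tab_X, Tab_one]
end
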